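/- arXiv:1710.10965 — 3 statements merged into one kernel-verified Lean document; each statement's English description precedes it below -/
import Mathlib

section
/- Let X₁ be the real skew-symmetric matrix with rows (0,1,0),(−1,0,0),(0,0,0) and X₂ the one with rows (0,0,1),(0,0,0),(−1,0,0), and set Y₁ := X₁·Z₀ − Z₀·X₁ and Y₂ := X₂·Z₀ − Z₀·X₂. Then, with respect to the real Frobenius inner product ⟨A,B⟩ := tr(A·Bᵀ) on real 3×3 matrices: the real part and the imaginary part of Y₁ are orthogonal, the real part and the imaginary part of Y₂ are orthogonal, the Frobenius norm of Re(Y₁) equals twice the Frobenius norm of Im(Y₁), and the Frobenius norm of Im(Y₂) equals twice the Frobenius norm of Re(Y₂). (These relations show that Y₁ and Y₂ have characteristic angle arctan(1/2).) -/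
open Matrix

/-- The point `Z₀ = (1/2)·[[0,1,i],[1,0,0],[i,0,0]]` of the complex quadric. -/
noncomputable def Z₀ : Matrix (Fin 3) (Fin 3) ℂ :=
  (1/2 : ℂ) • !![0, 1, Complex.I; 1, 0, 0; Complex.I, 0, 0]

/-- `X₁`, viewed as a complex matrix. -/
noncomputable def X₁ : Matrix (Fin 3) (Fin 3) ℂ := !![0, 1, 0; -1, 0, 0; 0, 0, 0]

/-- `X₂`, viewed as a complex matrix. -/
noncomputable def X₂ : Matrix (Fin 3) (Fin 3) ℂ := !![0, 0, 1; 0, 0, 0; -1, 0, 0]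

/-- `Y₁ = X₁·Z₀ − Z₀·X₁`. -/
noncomputable def Y₁ : Matrix (Fin 3) (Fin 3) ℂ := X₁ * Z₀ - Z₀ * X₁

/-- `Y₂ = X₂·Z₀ − Z₀·X₂`. -/
noncomputable def Y₂ : Matrix (Fin 3) (Fin 3) ℂ := X₂ * Z₀ - Z₀ * X₂

/-- The entrywise real part of a complex matrix. -/
noncomputable def reMat (Y : Matrix (Fin 3) (Fin 3) ℂ) : Matrix (Fin 3) (Fin 3) ℝ :=
  Y.map Complex.re

/-- The entrywise imaginary part of a complex matrix. -/
noncomputable def imMat (Y : Matrix (Fin 3) (Fin 3) ℂ) : Matrix (Fin 3) (Fin 3) ℝ :=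
  Y.map Complex.im

/-- The real Frobenius inner product `⟨A,B⟩ = tr(A·Bᵀ)` on real 3×3 matrices. -/
noncomputable def frobInner (A B : Matrix (Fin 3) (Fin 3) ℝ) : ℝ := (A * Bᵀ).trace

/-- The Frobenius norm of a real 3×3 matrix. -/
noncomputable def frobNorm (A : Matrix (Fin 3) (Fin 3) ℝ) : ℝ := Real.sqrt ((A * Aᵀ).trace)

/-! Computing the commutators gives `Y₁ = diag(1,-1,0) - (i/2)·S` and
`Y₂ = -(1/2)·S + i·diag(1,0,-1)` with `S = E₂₃ + E₃₂`. In each case the real and imaginary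
parts have disjoint supports, hence are orthogonal, and the diagonal part has squared norm `2`
against `1/2` for the multiple of `S`. -/

lemma frobInner_eq_sum (A B : Matrix (Fin 3) (Fin 3) ℝ) :
    frobInner A B = ∑ i, ∑ j, A i j * B i j := by
  simp only [frobInner, trace, diag, mul_apply, transpose_apply]

lemma frobNorm_eq_sqrt_frobInner (A : Matrix (Fin 3) (Fin 3) ℝ) :
    frobNorm A = Real.sqrt (frobInner A A) := rfl

lemma frobNorm_eq_two_mul_of_frobInner_self_eq {A B : Matrix (Fin 3) (Fin 3) ℝ}
    (h : frobInner A A = 4 * frobInner B B) : frobNorm A = 2 * frobNorm B := by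
  rw [frobNorm_eq_sqrt_frobInner, frobNorm_eq_sqrt_frobInner, h,
    Real.sqrt_mul (by norm_num), show (4 : ℝ) = 2 ^ 2 by norm_num, Real.sqrt_sq (by norm_num)]

lemma Y₁_eq : Y₁ = !![1, 0, 0; 0, -1, -Complex.I / 2; 0, -Complex.I / 2, 0] := by
  ext i j
  fin_cases i <;> fin_cases j <;>
    simp [Y₁, X₁, Z₀] <;> ring

lemma Y₂_eq : Y₂ = !![Complex.I, 0, 0; 0, 0, -1 / 2; 0, -1 / 2, -Complex.I] := by
  ext i j
  fin_cases i <;> fin_cases j <;>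
    simp [Y₂, X₂, Z₀] <;> ring

lemma reMat_Y₁ : reMat Y₁ = !![1, 0, 0; 0, -1, 0; 0, 0, 0] := by
  ext i j
  fin_cases i <;> fin_cases j <;> simp [reMat, Y₁_eq]

lemma imMat_Y₁ : imMat Y₁ = !![0, 0, 0; 0, 0, -1 / 2; 0, -1 / 2, 0] := by
  ext i j
  fin_cases i <;> fin_cases j <;> simp [imMat, Y₁_eq]

lemma reMat_Y₂ : reMat Y₂ = !![0, 0, 0; 0, 0, -1 / 2; 0, -1 / 2, 0] := by
  ext i j
  fin_cases i <;> fin_cases j <;> simp [reMat, Y₂_eq]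

lemma imMat_Y₂ : imMat Y₂ = !![1, 0, 0; 0, 0, 0; 0, 0, -1] := by
  ext i j
  fin_cases i <;> fin_cases j <;> simp [imMat, Y₂_eq]

/-- With respect to the Frobenius inner product, `Re Y₁ ⊥ Im Y₁` and `Re Y₂ ⊥ Im Y₂`, while
`‖Re Y₁‖ = 2·‖Im Y₁‖` and `‖Im Y₂‖ = 2·‖Re Y₂‖`; so `Y₁`, `Y₂` have characteristic angle
`arctan(1/2)`. -/
theorem characteristic_angle_of_Y₁_Y₂ :
    frobInner (reMat Y₁) (imMat Y₁) = 0 ∧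
    frobInner (reMat Y₂) (imMat Y₂) = 0 ∧
    frobNorm (reMat Y₁) = 2 * frobNorm (imMat Y₁) ∧
    frobNorm (imMat Y₂) = 2 * frobNorm (reMat Y₂) := by
  refine ⟨?_, ?_, frobNorm_eq_two_mul_of_frobInner_self_eq ?_,
    frobNorm_eq_two_mul_of_frobInner_self_eq ?_⟩ <;>
    norm_num [reMat_Y₁, imMat_Y₁, reMat_Y₂, imMat_Y₂, frobInner_eq_sum, Fin.sum_univ_succ]
end

section
/- The following seven elements of ⋀³ℂ⁶ lie in the kernel of the contraction κ and are linearly independent over ℂ: e₁∧e₂∧e₃; (J·e₁)∧e₂∧e₃; e₁∧(J·e₂)∧e₃; e₁∧e₂∧(J·e₃); e₁∧e₂∧(J·e₂) − e₁∧e₃∧(J·e₃); e₂∧e₁∧(J·e₁) − e₂∧e₃∧(J·e₃); e₃∧e₁∧(J·e₁) − e₃∧e₂∧(J·e₂). -/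
/-!
Write `eᵢ` for `e6 (i - 1)`. Since `ω(u, Jw) = -H(u, w)`, `ω(Jv, w) = H(w, v)` and `e₁, e₂, e₃` span a
Lagrangian subspace, all terms of `κ` on the first four elements vanish by orthonormality, while
each of the last three is a difference of two wedges `u ∧ eₖ ∧ Jeₖ`, each of which `κ` maps to
`ω(eₖ, Jeₖ) • u = -u`. For linear independence, each `xi j` contains a monomial `eₐ ∧ e_b ∧ e_c`
that occurs in no other `xi i`, so the `3 × 3` minors in the columns `a, b, c` form a family of
functionals biorthogonal to `xi`.
-/

/-- The quaternionic structure `J` on ℂ⁶. -/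
noncomputable def J6 : (Fin 6 → ℂ) → (Fin 6 → ℂ) := fun v k =>
  if (k : ℕ) < 3 then -(starRingEnd ℂ) (v (k + 3)) else (starRingEnd ℂ) (v (k - 3))

/-- The standard Hermitian product on ℂ⁶. -/
noncomputable def H6 (v w : Fin 6 → ℂ) : ℂ := ∑ k, v k * (starRingEnd ℂ) (w k)

/-- The complex symplectic form `ω(v,w) = H(v, J·w)` on ℂ⁶. -/
noncomputable def ω6 (v w : Fin 6 → ℂ) : ℂ := H6 v (J6 w)

/-- The trilinear map `T(v₁,v₂,v₃) = ω(v₁,v₂)·v₃ + ω(v₂,v₃)·v₁ + ω(v₃,v₁)·v₂`. -/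
noncomputable def T6 (v₁ v₂ v₃ : Fin 6 → ℂ) : Fin 6 → ℂ :=
  ω6 v₁ v₂ • v₃ + ω6 v₂ v₃ • v₁ + ω6 v₃ v₁ • v₂

/-- The decomposable element `v₁ ∧ v₂ ∧ v₃` of the third exterior power `⋀³ℂ⁶`. -/
noncomputable def wedge3 (v : Fin 3 → (Fin 6 → ℂ)) : ⋀[ℂ]^3 (Fin 6 → ℂ) :=
  ⟨ExteriorAlgebra.ιMulti ℂ 3 v, ExteriorAlgebra.ιMulti_range ℂ 3 ⟨v, rfl⟩⟩

/-- The standard basis vectors of ℂ⁶. -/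
noncomputable def e6 (i : Fin 6) : Fin 6 → ℂ := Pi.single i 1

/-- The seven elements
`e₁∧e₂∧e₃`, `(Je₁)∧e₂∧e₃`, `e₁∧(Je₂)∧e₃`, `e₁∧e₂∧(Je₃)`,
`e₁∧e₂∧(Je₂) − e₁∧e₃∧(Je₃)`, `e₂∧e₁∧(Je₁) − e₂∧e₃∧(Je₃)`,
`e₃∧e₁∧(Je₁) − e₃∧e₂∧(Je₂)` of `⋀³ℂ⁶`. -/
noncomputable def xi : Fin 7 → (⋀[ℂ]^3 (Fin 6 → ℂ)) :=
  ![wedge3 ![e6 0, e6 1, e6 2],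
    wedge3 ![J6 (e6 0), e6 1, e6 2],
    wedge3 ![e6 0, J6 (e6 1), e6 2],
    wedge3 ![e6 0, e6 1, J6 (e6 2)],
    wedge3 ![e6 0, e6 1, J6 (e6 1)] - wedge3 ![e6 0, e6 2, J6 (e6 2)],
    wedge3 ![e6 1, e6 0, J6 (e6 0)] - wedge3 ![e6 1, e6 2, J6 (e6 2)],
    wedge3 ![e6 2, e6 0, J6 (e6 0)] - wedge3 ![e6 2, e6 1, J6 (e6 1)]]

lemma J6_J6 (v : Fin 6 → ℂ) : J6 (J6 v) = -v := by
  funext k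
  fin_cases k <;> simp [J6]

lemma ω6_J6_right (v w : Fin 6 → ℂ) : ω6 v (J6 w) = -H6 v w := by
  simp [ω6, J6_J6, H6]

lemma ω6_J6_left (v w : Fin 6 → ℂ) : ω6 (J6 v) w = H6 w v := by
  simp only [ω6, H6, J6, Fin.sum_univ_six, Fin.coe_ofNat_eq_mod, Nat.reduceMod, Nat.reduceLT,
    ↓reduceIte, Fin.reduceAdd, Fin.reduceSub, map_neg, Complex.conj_conj, neg_mul, mul_neg, neg_neg]
  ring

lemma H6_e6_e6 (a b : Fin 6) : H6 (e6 a) (e6 b) = if a = b then 1 else 0 := by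
  simp [H6, e6, Pi.single_apply, eq_comm]

lemma ω6_e6_e6_of_lt {a b : Fin 6} (ha : (a : ℕ) < 3) (hb : (b : ℕ) < 3) :
    ω6 (e6 a) (e6 b) = 0 := by
  fin_cases a <;> fin_cases b <;> simp_all [ω6, H6, J6, e6, Fin.sum_univ_six]

noncomputable def minor {R ι : Type*} [CommRing R] {n : ℕ} (s : Fin n → ι) :
    Module.Dual R (⋀[R]^n (ι → R)) :=
  exteriorPower.pairingDual R (ι → R) n (exteriorPower.ιMulti R n fun j => LinearMap.proj (s j))

lemma minor_ιMulti {R ι : Type*} [CommRing R] {n : ℕ} (s : Fin n → ι) (v : Fin n → ι → R) :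
    minor s (exteriorPower.ιMulti R n v) = (Matrix.of fun i j => v i (s j)).det := by
  simp [minor]

lemma minor_wedge3 (s : Fin 3 → Fin 6) (v : Fin 3 → Fin 6 → ℂ) :
    minor s (wedge3 v) = (Matrix.of fun i j => v i (s j)).det :=
  minor_ιMulti s v

def xiDualIndex : Fin 7 → Fin 3 → Fin 6 :=
  ![![0, 1, 2], ![3, 1, 2], ![0, 4, 2], ![0, 1, 5], ![0, 1, 4], ![1, 0, 3], ![2, 0, 3]]

lemma minor_xiDualIndex_xi (i j : Fin 7) :
    minor (xiDualIndex i) (xi j) = if i = j then 1 else 0 := by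
  fin_cases i <;> fin_cases j <;>
    simp [xiDualIndex, xi, minor_wedge3, Matrix.det_fin_three, J6, e6, Pi.single_apply]

theorem linearIndependent_xi : LinearIndependent ℂ xi :=
  .of_pairwise_dual_eq_zero_one xi (fun i => minor (xiDualIndex i))
    (fun i j hij => by simpa [hij] using minor_xiDualIndex_xi i j)
    (fun i => by simpa using minor_xiDualIndex_xi i i)

/-- The seven listed elements of `⋀³ℂ⁶` lie in the kernel of the contraction `κ` and are
linearly independent over ℂ. -/
theorem seven_elements_in_ker_contraction
    (κ : (⋀[ℂ]^3 (Fin 6 → ℂ)) →ₗ[ℂ] (Fin 6 → ℂ))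
    (hκ : ∀ v₁ v₂ v₃ : Fin 6 → ℂ, κ (wedge3 ![v₁, v₂, v₃]) = T6 v₁ v₂ v₃) :
    (∀ i : Fin 7, xi i ∈ LinearMap.ker κ) ∧ LinearIndependent ℂ xi := by
  refine ⟨fun i => ?_, linearIndependent_xi⟩
  rw [LinearMap.mem_ker]
  fin_cases i <;> simp [xi, hκ, T6, ω6_J6_left, ω6_J6_right, H6_e6_e6, ω6_e6_e6_of_lt]
end

section
/- For all v₁, v₂, v₃ ∈ ℂ⁶ one has ω(J·v₁, J·v₂)·(J·v₃) + ω(J·v₂, J·v₃)·(J·v₁) + ω(J·v₃, J·v₁)·(J·v₂) = J( ω(v₁,v₂)·v₃ + ω(v₂,v₃)·v₁ + ω(v₃,v₁)·v₂ ); that is, on decomposable elements the contraction satisfies κ(J·v₁ ∧ J·v₂ ∧ J·v₃) = J(κ(v₁∧v₂∧v₃)), so κ is J-equivariant. -/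
theorem LinearMap.map_cyclic_smul_add {R M : Type*} [Semiring R] [AddCommMonoid M] [Module R M]
    {σ : R →+* R} (f : M →ₛₗ[σ] M) (ω : M → M → R) (hω : ∀ v w, ω (f v) (f w) = σ (ω v w))
    (v₁ v₂ v₃ : M) :
    f (ω v₁ v₂ • v₃ + ω v₂ v₃ • v₁ + ω v₃ v₁ • v₂) =
      ω (f v₁) (f v₂) • f v₃ + ω (f v₂) (f v₃) • f v₁ + ω (f v₃) (f v₁) • f v₂ := by
  simp only [map_add, map_smulₛₗ, hω]

noncomputable def J6ₛₗ : (Fin 6 → ℂ) →ₗ⋆[ℂ] (Fin 6 → ℂ) where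
  toFun := J6
  map_add' v w := by
    funext k
    simp only [J6, Pi.add_apply, map_add]
    split <;> ring
  map_smul' a v := by
    funext k
    simp only [J6, Pi.smul_apply, smul_eq_mul, map_mul]
    split <;> ring

theorem H6_J6_J6 (v w : Fin 6 → ℂ) : H6 (J6 v) (J6 w) = starRingEnd ℂ (H6 v w) := by
  simp [H6, J6, Fin.sum_univ_six]
  ring

theorem ω6_J6_J6 (v w : Fin 6 → ℂ) : ω6 (J6 v) (J6 w) = starRingEnd ℂ (ω6 v w) := by
  rw [ω6, H6_J6_J6, ω6]

/-- On decomposable elements the contraction is `J`-equivariant: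
`κ(Jv₁ ∧ Jv₂ ∧ Jv₃) = J(κ(v₁∧v₂∧v₃))`. -/
theorem contraction_J_equivariant (v₁ v₂ v₃ : Fin 6 → ℂ) :
    ω6 (J6 v₁) (J6 v₂) • J6 v₃ + ω6 (J6 v₂) (J6 v₃) • J6 v₁ + ω6 (J6 v₃) (J6 v₁) • J6 v₂ =
      J6 (ω6 v₁ v₂ • v₃ + ω6 v₂ v₃ • v₁ + ω6 v₃ v₁ • v₂) :=
  (J6ₛₗ.map_cyclic_smul_add ω6 ω6_J6_J6 v₁ v₂ v₃).symm
end
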